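/- For all integers n ≥ 1, pl̄_6(15n) ≡ 2 (mod 4) and pl̄_6(15n+3) ≡ 0 (mod 4) and pl̄_6(15n+5) ≡ 0 (mod 4), where pl̄_6 counts plane overpartitions with at most 6 rows. -/

import Mathlib

/-!
Modulo 4 each factor `(1+q^k)/(1-q^k) = 1 + 2q^k/(1-q^k)` squares to `1`, so in
`∏ ((1+q^k)/(1-q^k))^(min 6 k)` only the factors with odd exponent, `k = 1, 3, 5`, survive;
and since `(1+2a)(1+2b) ≡ 1+2(a+b)`, their product is `1 + 2∑_{k=1,3,5} q^k/(1-q^k)`.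
Hence `pl̄₆(m) ≡ 2·#{k ∈ {1,3,5} : k ∣ m} (mod 4)` for `m > 0`, which is `6`, `4`, `4` at
`m = 15n, 15n+3, 15n+5`.
-/

open PowerSeries

/-- The formal power series `(1+q^k)/(1-q^k)` in `ℤ⟦q⟧`. -/
noncomputable def fps (k : ℕ) : PowerSeries ℤ :=
  (1 + (PowerSeries.X : PowerSeries ℤ) ^ k) *
    PowerSeries.invOfUnit (1 - (PowerSeries.X : PowerSeries ℤ) ^ k) 1

/-- The number of overpartitions of `n`: the coefficient of `q^n` in
`∏_{k≥1} (1+q^k)/(1-q^k)`.  Since each factor with `k > n` contributes only `1`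
to coefficients up to degree `n`, the product may be truncated at `k = n`. -/
noncomputable def pbar (n : ℕ) : ℤ :=
  PowerSeries.coeff n (∏ k ∈ Finset.Icc 1 n, fps k)

/-- The number of plane overpartitions of `n` with at most `K` rows: the coefficient
of `q^n` in `∏_{k≥1} ((1+q^k)/(1-q^k))^(min K k)`, truncated at `k = n`. -/
noncomputable def plbark (K n : ℕ) : ℤ :=
  PowerSeries.coeff n (∏ k ∈ Finset.Icc 1 n, fps k ^ min K k)

open Finset

section CharFour

variable {R : Type*} [CommRing R]

theorem one_add_two_mul_sq_of_four_eq_zero (h4 : (4 : R) = 0) (a : R) :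
    (1 + 2 * a) ^ 2 = 1 := by
  linear_combination (a + a ^ 2) * h4

theorem prod_one_add_two_mul_of_four_eq_zero (h4 : (4 : R) = 0) {ι : Type*} (s : Finset ι)
    (f : ι → R) : ∏ i ∈ s, (1 + 2 * f i) = 1 + 2 * ∑ i ∈ s, f i := by
  induction s using Finset.cons_induction with
  | empty => simp
  | cons i s hi ih =>
    rw [prod_cons, sum_cons, ih]
    linear_combination f i * (∑ j ∈ s, f j) * h4

end CharFour

theorem prod_Icc_pow_min_of_sq_eq_one {M : Type*} [CommMonoid M] {x : ℕ → M} {K m : ℕ}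
    (hK : Even K) (hKm : K ≤ m + 1) (hx : ∀ k ∈ Icc 1 m, x k ^ 2 = 1) :
    ∏ k ∈ Icc 1 m, x k ^ min K k = ∏ k ∈ range K with Odd k, x k := by
  have hexp : ∀ k, min K k % 2 = if Odd k ∧ k < K then 1 else 0 := by
    intro k
    obtain ⟨K, rfl⟩ := hK
    split_ifs with h <;> simp only [Nat.odd_iff, not_and_or, Nat.mod_two_ne_one] at h <;> omega
  calc ∏ k ∈ Icc 1 m, x k ^ min K k
      = ∏ k ∈ Icc 1 m, if Odd k ∧ k < K then x k else 1 :=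
        prod_congr rfl fun k hk => by
          rw [pow_eq_pow_mod _ (hx k hk), hexp, pow_ite, pow_one, pow_zero]
    _ = ∏ k ∈ range K with Odd k, x k := by
        rw [← prod_filter]
        congr 1
        ext k
        simp only [mem_filter, mem_Icc, mem_range, Nat.odd_iff]
        omega

def multiplesSeries (R : Type*) [Semiring R] (k : ℕ) : R⟦X⟧ :=
  mk fun m => if k ∣ m ∧ m ≠ 0 then 1 else 0

theorem one_sub_X_pow_mul_multiplesSeries {R : Type*} [Ring R] {k : ℕ} (hk : k ≠ 0) :
    (1 - X ^ k) * multiplesSeries R k = X ^ k := by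
  ext m
  rw [sub_mul, one_mul, map_sub, coeff_X_pow_mul', coeff_X_pow]
  simp only [multiplesSeries, coeff_mk]
  by_cases hkm : k ≤ m
  · rw [if_pos hkm]
    rcases eq_or_ne m k with rfl | hmk
    · simp [hk]
    · have hmk' : m - k ≠ 0 := by omega
      simp [hmk, hmk', show m ≠ 0 by omega, Nat.dvd_sub_iff_left hkm dvd_rfl]
  · have hndvd : ¬ (k ∣ m ∧ m ≠ 0) := fun h => hkm (Nat.le_of_dvd (by omega) h.1)
    simp [hkm, hndvd, show m ≠ k by omega]

theorem map_multiplesSeries {R S : Type*} [Semiring R] [Semiring S] (f : R →+* S) (k : ℕ) :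
    map f (multiplesSeries R k) = multiplesSeries S k := by
  ext m
  simp [multiplesSeries, apply_ite f]

theorem fps_eq_one_add_two_mul_multiplesSeries {k : ℕ} (hk : k ≠ 0) :
    fps k = 1 + 2 * multiplesSeries ℤ k := by
  have hinv : (1 - X ^ k) * invOfUnit (1 - X ^ k : ℤ⟦X⟧) 1 = 1 :=
    mul_invOfUnit _ 1 (by simp [zero_pow hk])
  rw [fps]
  linear_combination (1 + 2 * multiplesSeries ℤ k) * hinv -
    2 * invOfUnit (1 - X ^ k : ℤ⟦X⟧) 1 * one_sub_X_pow_mul_multiplesSeries (R := ℤ) hk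

theorem plbark_cast_zmod_four {K m : ℕ} (hK : Even K) (hKm : K ≤ m + 1) (hm : m ≠ 0) :
    (plbark K m : ZMod 4) = 2 * #{k ∈ range K | Odd k ∧ k ∣ m} := by
  have h4 : (4 : (ZMod 4)⟦X⟧) = 0 := by
    rw [← map_ofNat (C : ZMod 4 →+* _), show (4 : ZMod 4) = 0 by decide, map_zero]
  have hfactor : ∀ k ∈ Icc 1 m,
      map (Int.castRingHom (ZMod 4)) (fps k) = 1 + 2 * multiplesSeries (ZMod 4) k := by
    intro k hk
    rw [fps_eq_one_add_two_mul_multiplesSeries (Nat.one_le_iff_ne_zero.mp (mem_Icc.mp hk).1),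
      map_add, map_mul, map_one, map_ofNat, map_multiplesSeries]
  calc (plbark K m : ZMod 4)
      = coeff m (∏ k ∈ Icc 1 m, map (Int.castRingHom (ZMod 4)) (fps k) ^ min K k) := by
        simp only [← map_pow, ← map_prod, coeff_map, plbark, eq_intCast]
    _ = coeff m (∏ k ∈ range K with Odd k, (1 + 2 * multiplesSeries (ZMod 4) k)) := by
        rw [prod_congr rfl fun k hk => by rw [hfactor k hk],
          prod_Icc_pow_min_of_sq_eq_one hK hKm
            fun k _ => one_add_two_mul_sq_of_four_eq_zero h4 _]
    _ = 2 * #{k ∈ range K | Odd k ∧ k ∣ m} := by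
        rw [prod_one_add_two_mul_of_four_eq_zero h4, ← map_ofNat C 2, map_add, coeff_C_mul,
          map_sum]
        simp [multiplesSeries, coeff_one, hm, filter_filter]

theorem card_odd_dvd_range_six_mod_fifteen (m : ℕ) :
    #{k ∈ range 6 | Odd k ∧ k ∣ m} = #{k ∈ range 6 | Odd k ∧ k ∣ m % 15} := by
  refine congrArg card (filter_congr fun k hk => and_congr_right fun hodd => ?_)
  have hk15 : k ∣ 15 := by
    rw [mem_range] at hk
    interval_cases k <;> first | decide | exact absurd hodd (by decide)
  exact (Nat.dvd_mod_iff hk15).symm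

/-- For all `n ≥ 1`, `pl̄₆(15n) ≡ 2`, `pl̄₆(15n+3) ≡ 0`, and
`pl̄₆(15n+5) ≡ 0 (mod 4)`. -/
theorem plbark_six_mod_four (n : ℕ) (hn : 1 ≤ n) :
    plbark 6 (15 * n) ≡ 2 [ZMOD 4] ∧
      plbark 6 (15 * n + 3) ≡ 0 [ZMOD 4] ∧
      plbark 6 (15 * n + 5) ≡ 0 [ZMOD 4] := by
  refine ⟨?_, ?_, ?_⟩ <;> apply (ZMod.intCast_eq_intCast_iff _ _ 4).mp <;>
    rw [plbark_cast_zmod_four (by decide) (by omega) (by omega),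
      card_odd_dvd_range_six_mod_fifteen]
  · rw [show 15 * n % 15 = 0 by omega]; decide
  · rw [show (15 * n + 3) % 15 = 3 by omega]; decide
  · rw [show (15 * n + 5) % 15 = 5 by omega]; decide
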